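/- arXiv:1809.08830 — 2 statements merged into one kernel-verified Lean document; each statement's English description precedes it below -/
import Mathlib

section
/- Let ρ > 0, let Σ ∈ ℝ^{d×d} be symmetric positive definite, and let D ∈ ℝ^{d×d} be symmetric positive semidefinite with D ≠ 0. For every symmetric positive semidefinite S ∈ ℝ^{d×d} with B(S) ≤ ρ² and every γ ∈ ℝ such that γ I_d − D is positive definite, one has ⟨S, D⟩ ≤ γ·(ρ² − Tr(Σ)) + γ²·Tr((γ I_d − D)^{-1} Σ). -/
/-!
Weak Lagrangian duality. Put `Q = Σ^{1/2}`, `R = (Q S Q)^{1/2}` and `A = γ I − D ≻ 0`. The matrix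
`V = Q⁻¹ R − γ A⁻¹ Q` satisfies `0 ≤ Tr(Vᵀ A V) = Tr(S A) − 2γ Tr R + γ² Tr(A⁻¹ Σ)`.
Since `⟨S, D⟩ = γ Tr S − Tr(S A)` and `γ > 0`, adding `γ` times the constraint
`B(S) = Tr S + Tr Σ − 2 Tr R ≤ ρ²` gives the bound.
-/

open Matrix

-- `msqrt M` is the unique symmetric PSD square root of a symmetric PSD matrix `M` (else `0`).
open Classical in
noncomputable def msqrt {ι : Type*} [Fintype ι] [DecidableEq ι] (M : Matrix ι ι ℝ) : Matrix ι ι ℝ :=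
  if h : M.PosSemidef then
    h.1.eigenvectorUnitary.1 * diagonal (fun i => Real.sqrt (h.1.eigenvalues i)) *
      (star h.1.eigenvectorUnitary : Matrix ι ι ℝ)
  else 0

/-- `Bdist Sg S = Tr(S + Σ − 2(Σ^{1/2} S Σ^{1/2})^{1/2})`. -/
noncomputable def Bdist {ι : Type*} [Fintype ι] [DecidableEq ι] (Sg S : Matrix ι ι ℝ) : ℝ :=
  (S + Sg - (2:ℝ) • msqrt (msqrt Sg * S * msqrt Sg)).trace

theorem pos_of_posDef_smul_one_sub {m : Type*} [DecidableEq m] [Nonempty m]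
    {D : Matrix m m ℝ} {γ : ℝ} (hD : D.PosSemidef) (h : (γ • (1 : Matrix m m ℝ) - D).PosDef) : 0 < γ := by
  obtain ⟨i⟩ := ‹Nonempty m›
  have hdiag : 0 < γ - D i i := by simpa using h.diag_pos (i := i)
  linarith [hD.diag_nonneg (i := i)]

variable {n : Type*} [Fintype n] [DecidableEq n]

theorem msqrt_posSemidef {M : Matrix n n ℝ} (hM : M.PosSemidef) : (msqrt M).PosSemidef := by
  rw [msqrt, dif_pos hM]
  have hdiag : (diagonal fun i => √(hM.1.eigenvalues i)).PosSemidef :=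
    posSemidef_diagonal_iff.mpr fun _ => Real.sqrt_nonneg _
  simpa [star_eq_conjTranspose] using
    hdiag.mul_mul_conjTranspose_same (hM.1.eigenvectorUnitary : Matrix n n ℝ)

theorem msqrt_mul_self {M : Matrix n n ℝ} (hM : M.PosSemidef) : msqrt M * msqrt M = M := by
  rw [msqrt, dif_pos hM]
  set U := hM.1.eigenvectorUnitary
  have hU : (star U : Matrix n n ℝ) * U = 1 := Unitary.coe_star_mul_self U
  have hsq : (fun i => √(hM.1.eigenvalues i) * √(hM.1.eigenvalues i)) =
      RCLike.ofReal ∘ hM.1.eigenvalues :=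
    funext fun i => by simp [Real.mul_self_sqrt (hM.eigenvalues_nonneg i)]
  have hspec := hM.1.spectral_theorem
  rw [Unitary.conjStarAlgAut_apply] at hspec
  calc _ = (U : Matrix n n ℝ) * (diagonal (fun i => √(hM.1.eigenvalues i)) *
        ((star U : Matrix n n ℝ) * U) * diagonal (fun i => √(hM.1.eigenvalues i))) *
        (star U : Matrix n n ℝ) := by simp only [Matrix.mul_assoc]
    _ = M := by rw [hU, Matrix.mul_one, diagonal_mul_diagonal, hsq]; exact hspec.symm

theorem isUnit_msqrt {M : Matrix n n ℝ} (hM : M.PosDef) : IsUnit (msqrt M) := by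
  have hdet : IsUnit ((msqrt M).det * (msqrt M).det) := by
    rw [← det_mul, msqrt_mul_self hM.posSemidef]
    exact (isUnit_iff_isUnit_det M).mp hM.isUnit
  exact (isUnit_iff_isUnit_det _).mpr (isUnit_of_mul_isUnit_left hdet)

theorem Bdist_eq (Sg S : Matrix n n ℝ) :
    Bdist Sg S = S.trace + Sg.trace - 2 * (msqrt (msqrt Sg * S * msqrt Sg)).trace := by
  simp only [Bdist, trace_sub, trace_add, trace_smul, smul_eq_mul]

theorem two_mul_trace_le_of_mul_self_eq {Q R S A : Matrix n n ℝ} (hQ : IsUnit Q)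
    (hQh : Q.IsHermitian) (hRh : R.IsHermitian) (hRR : R * R = Q * S * Q) (hA : A.PosDef)
    (t : ℝ) : 2 * t * R.trace ≤ (S * A).trace + t ^ 2 * (A⁻¹ * (Q * Q)).trace := by
  have hQd : IsUnit Q.det := (isUnit_iff_isUnit_det Q).mp hQ
  have hAd : IsUnit A.det := (isUnit_iff_isUnit_det A).mp hA.isUnit
  set V := Q⁻¹ * R - t • (A⁻¹ * Q)
  have hVh : Vᴴ = R * Q⁻¹ - t • (Q * A⁻¹) := by
    simp only [V, conjTranspose_sub, conjTranspose_smul, conjTranspose_mul,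
      conjTranspose_nonsing_inv, hQh.eq, hRh.eq, hA.isHermitian.eq, star_trivial]
  have hexp : Vᴴ * A * V = R * Q⁻¹ * A * Q⁻¹ * R - (2 * t) • R + t ^ 2 • (Q * A⁻¹ * Q) := by
    rw [hVh]
    simp only [V, sub_mul, mul_sub, Matrix.smul_mul, Matrix.mul_smul, Matrix.mul_assoc,
      mul_nonsing_inv_cancel_left _ _ hAd, nonsing_inv_mul_cancel_left _ _ hAd,
      mul_nonsing_inv_cancel_left _ _ hQd, nonsing_inv_mul _ hQd, Matrix.mul_one]
    module
  have htr : (R * Q⁻¹ * A * Q⁻¹ * R).trace = (S * A).trace :=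
    calc (R * Q⁻¹ * A * Q⁻¹ * R).trace = (R * (Q⁻¹ * A * Q⁻¹ * R)).trace := by
          simp only [Matrix.mul_assoc]
      _ = (Q⁻¹ * A * Q⁻¹ * R * R).trace := trace_mul_comm _ _
      _ = (Q⁻¹ * A * (Q⁻¹ * Q) * S * Q).trace := by
          rw [Matrix.mul_assoc _ R R, hRR]; simp only [Matrix.mul_assoc]
      _ = (Q⁻¹ * (A * S * Q)).trace := by
          rw [nonsing_inv_mul _ hQd]; simp only [Matrix.mul_one, Matrix.mul_assoc]
      _ = (A * S * Q * Q⁻¹).trace := trace_mul_comm _ _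
      _ = (S * A).trace := by rw [mul_nonsing_inv_cancel_right _ _ hQd, trace_mul_comm]
  have hnonneg := (hA.posSemidef.conjTranspose_mul_mul_same V).trace_nonneg
  rw [hexp, trace_add, trace_sub, trace_smul, trace_smul, htr, trace_mul_cycle, smul_eq_mul,
    smul_eq_mul, trace_mul_comm (Q * Q)] at hnonneg
  linarith

theorem two_mul_trace_msqrt_le {Sg S A : Matrix n n ℝ} (hSg : Sg.PosDef) (hS : S.PosSemidef)
    (hA : A.PosDef) (t : ℝ) :
    2 * t * (msqrt (msqrt Sg * S * msqrt Sg)).trace ≤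
      (S * A).trace + t ^ 2 * (A⁻¹ * Sg).trace := by
  have hQ := msqrt_posSemidef hSg.posSemidef
  have hM : (msqrt Sg * S * msqrt Sg).PosSemidef := by
    simpa only [hQ.isHermitian.eq] using hS.mul_mul_conjTranspose_same (msqrt Sg)
  simpa only [msqrt_mul_self hSg.posSemidef] using
    two_mul_trace_le_of_mul_self_eq (isUnit_msqrt hSg) hQ.isHermitian
      (msqrt_posSemidef hM).isHermitian (msqrt_mul_self hM) hA t

theorem stmt3_general {d : ℕ} [NeZero d] (ρ : ℝ) (Sg D : Matrix (Fin d) (Fin d) ℝ)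
    (hSg : Sg.PosDef) (hD : D.PosSemidef)
    (S : Matrix (Fin d) (Fin d) ℝ) (hS : S.PosSemidef) (hB : Bdist Sg S ≤ ρ ^ 2)
    (γ : ℝ) (hγ : (γ • (1 : Matrix (Fin d) (Fin d) ℝ) - D).PosDef) :
    (Sᵀ * D).trace ≤ γ * (ρ ^ 2 - Sg.trace) +
      γ ^ 2 * ((γ • (1 : Matrix (Fin d) (Fin d) ℝ) - D)⁻¹ * Sg).trace := by
  have hγpos : 0 < γ := pos_of_posDef_smul_one_sub hD hγ
  have hSt : Sᵀ = S := by
    simpa only [conjTranspose_eq_transpose_of_trivial] using hS.isHermitian.eq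
  have hpairing : (Sᵀ * D).trace = γ * S.trace - (S * (γ • 1 - D)).trace := by
    rw [hSt, mul_sub, trace_sub, Matrix.mul_smul, Matrix.mul_one, trace_smul, smul_eq_mul]
    ring
  have hdual := two_mul_trace_msqrt_le hSg hS hγ γ
  rw [Bdist_eq] at hB
  have hprimal := mul_le_mul_of_nonneg_left hB hγpos.le
  rw [hpairing]
  linarith

/-- Weak duality bound: for every feasible `S` and dual-feasible `γ`,
`⟨S, D⟩ ≤ γ(ρ² − Tr Σ) + γ² Tr((γI − D)⁻¹ Σ)`. -/
theorem stmt3 {d : ℕ} [NeZero d] (ρ : ℝ) (hρ : 0 < ρ) (Sg D : Matrix (Fin d) (Fin d) ℝ)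
    (hSg : Sg.PosDef) (hD : D.PosSemidef) (hD0 : D ≠ 0)
    (S : Matrix (Fin d) (Fin d) ℝ) (hS : S.PosSemidef) (hB : Bdist Sg S ≤ ρ ^ 2)
    (γ : ℝ) (hγ : (γ • (1 : Matrix (Fin d) (Fin d) ℝ) - D).PosDef) :
    (Sᵀ * D).trace ≤ γ * (ρ ^ 2 - Sg.trace) +
      γ ^ 2 * ((γ • (1 : Matrix (Fin d) (Fin d) ℝ) - D)⁻¹ * Sg).trace :=
  stmt3_general ρ Sg D hSg hD S hS hB γ hγ
end

section
/- Let ρ > 0, let Σ ∈ ℝ^{d×d} be symmetric positive definite, and let D ∈ ℝ^{d×d} be symmetric positive semidefinite with D ≠ 0. Let λ₁ be the largest eigenvalue of D and v₁ a corresponding unit eigenvector. If γ⋆ ∈ ℝ satisfies that γ⋆ I_d − D is positive definite and Tr(Σ (I_d − γ⋆ (γ⋆ I_d − D)^{-1})²) = ρ², then λ₁·(1 + √(v₁ᵀ Σ v₁)/ρ) ≤ γ⋆ ≤ λ₁·(1 + √(Tr Σ)/ρ). -/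
open Matrix

/-! Put `A = γs • 1 - D` and `B = γs • A⁻¹ - 1 = A⁻¹ * D`, a symmetric matrix. The matrix in the
root equation is `-B`, so `ρ² = Tr(Σ B²)`. Since `A (B x) = D x`, the Rayleigh bound `λ₁` and
Cauchy–Schwarz for the form of `D` give `(γs - λ₁) ‖B x‖ ≤ λ₁ ‖x‖`, while `B v₁ = μ v₁` with
`μ = λ₁ / (γs - λ₁)`. Hence `μ² v₁ᵀ Σ v₁ ≤ Tr(B Σ B) = ρ² ≤ μ² Tr Σ`, and taking square roots
gives the two bounds. -/

namespace Matrix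

variable {n : Type*} [Fintype n]

theorem PosSemidef.dotProduct_mulVec_self_nonneg {D : Matrix n n ℝ} (hD : D.PosSemidef)
    (x : n → ℝ) : 0 ≤ x ⬝ᵥ D *ᵥ x := by
  simpa using hD.dotProduct_mulVec_nonneg x

variable [DecidableEq n]

open scoped MatrixOrder in
theorem PosSemidef.trace_mul_nonneg {P Q : Matrix n n ℝ} (hP : P.PosSemidef) (hQ : Q.PosSemidef) :
    0 ≤ (P * Q).trace := by
  obtain ⟨R, rfl⟩ := CStarAlgebra.nonneg_iff_eq_star_mul_self.mp hP.nonneg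
  rw [star_eq_conjTranspose, Matrix.mul_assoc, trace_mul_comm]
  exact (hQ.mul_mul_conjTranspose_same R).trace_nonneg

open scoped MatrixOrder in
theorem PosSemidef.dotProduct_mulVec_sq_le {D : Matrix n n ℝ} (hD : D.PosSemidef) (x y : n → ℝ) :
    (x ⬝ᵥ D *ᵥ y) ^ 2 ≤ (x ⬝ᵥ D *ᵥ x) * (y ⬝ᵥ D *ᵥ y) := by
  obtain ⟨R, rfl⟩ := CStarAlgebra.nonneg_iff_eq_star_mul_self.mp hD.nonneg
  have hform (u w : n → ℝ) : u ⬝ᵥ (star R * R) *ᵥ w = (R *ᵥ u) ⬝ᵥ (R *ᵥ w) := by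
    simp only [← mulVec_mulVec, dotProduct_mulVec, star_eq_conjTranspose, vecMul_conjTranspose,
      star_trivial]
  simp only [hform]
  simpa [dotProduct, sq] using Finset.sum_mul_sq_le_sq_mul_sq Finset.univ (R *ᵥ x) (R *ᵥ y)

theorem PosSemidef.dotProduct_mulVec_le_trace {M : Matrix n n ℝ} (hM : M.PosSemidef)
    {v : n → ℝ} (hv : v ⬝ᵥ v = 1) : v ⬝ᵥ M *ᵥ v ≤ M.trace := by
  have hP : (1 - vecMulVec v v).PosSemidef := by
    refine .of_dotProduct_mulVec_nonneg ?_ fun x => ?_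
    · exact isHermitian_one.sub (by simpa using (posSemidef_vecMulVec_self_star v).isHermitian)
    · have hcs := PosSemidef.one.dotProduct_mulVec_sq_le v x
      simp only [one_mulVec, hv, one_mul] at hcs
      simp only [star_trivial, sub_mulVec, one_mulVec, dotProduct_sub, vecMulVec_mulVec,
        op_smul_eq_smul, dotProduct_smul, smul_eq_mul, dotProduct_comm x v]
      nlinarith
  have h := hM.trace_mul_nonneg hP
  rw [mul_sub, mul_one, trace_sub, mul_vecMulVec, trace_vecMulVec, dotProduct_comm] at h
  linarith

theorem IsHermitian.dotProduct_mulVec_sq {B : Matrix n n ℝ} (hB : B.IsHermitian) (x : n → ℝ) :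
    x ⬝ᵥ B ^ 2 *ᵥ x = (B *ᵥ x) ⬝ᵥ (B *ᵥ x) := by
  rw [sq, ← mulVec_mulVec, dotProduct_mulVec, ← mulVec_transpose,
    ← conjTranspose_eq_transpose_of_trivial, hB.eq]

theorem PosSemidef.mul_trace_mul_sq_le {S B : Matrix n n ℝ} (hS : S.PosSemidef)
    (hB : B.IsHermitian) {a b : ℝ} (h : ∀ x, a * ((B *ᵥ x) ⬝ᵥ (B *ᵥ x)) ≤ b * (x ⬝ᵥ x)) :
    a * (S * B ^ 2).trace ≤ b * S.trace := by
  have hK : (b • 1 - a • B ^ 2).PosSemidef := by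
    refine .of_dotProduct_mulVec_nonneg ?_ fun x => ?_
    · exact (isHermitian_one.smul (.all b)).sub ((hB.pow 2).smul (.all a))
    · simp only [star_trivial, sub_mulVec, smul_mulVec, one_mulVec, dotProduct_sub,
        dotProduct_smul, smul_eq_mul, hB.dotProduct_mulVec_sq]
      linarith [h x]
  have htr := hS.trace_mul_nonneg hK
  rw [mul_sub, Matrix.mul_smul, Matrix.mul_smul, mul_one, trace_sub, trace_smul, trace_smul,
    smul_eq_mul, smul_eq_mul] at htr
  linarith

theorem PosSemidef.dotProduct_mulVec_le_trace_mul_sq {S B : Matrix n n ℝ} (hS : S.PosSemidef)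
    (hB : B.IsHermitian) {v : n → ℝ} (hv : v ⬝ᵥ v = 1) :
    (B *ᵥ v) ⬝ᵥ S *ᵥ (B *ᵥ v) ≤ (S * B ^ 2).trace := by
  have h := (hS.conjTranspose_mul_mul_same B).dotProduct_mulVec_le_trace hv
  rwa [hB.eq, ← mulVec_mulVec, ← mulVec_mulVec, dotProduct_mulVec, ← mulVec_transpose,
    ← conjTranspose_eq_transpose_of_trivial, hB.eq, Matrix.mul_assoc, trace_mul_comm,
    Matrix.mul_assoc, ← sq] at h

/-- With `z = (γ • 1 - D)⁻¹ * D * x`: the bound `‖(γ • 1 - D)⁻¹ * D‖ ≤ lam / (γ - lam)`. -/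
theorem PosSemidef.sub_sq_mul_dotProduct_self_le {D : Matrix n n ℝ} (hD : D.PosSemidef)
    {γ lam : ℝ} (hmax : ∀ x, x ⬝ᵥ D *ᵥ x ≤ lam * (x ⬝ᵥ x)) (hγ : lam ≤ γ) {x z : n → ℝ}
    (hz : γ • z - D *ᵥ z = D *ᵥ x) : (γ - lam) ^ 2 * (z ⬝ᵥ z) ≤ lam ^ 2 * (x ⬝ᵥ x) := by
  have hzz : 0 ≤ z ⬝ᵥ z := by simpa using dotProduct_star_self_nonneg z
  have hlin : (γ - lam) * (z ⬝ᵥ z) ≤ z ⬝ᵥ D *ᵥ x := by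
    have hsplit : γ * (z ⬝ᵥ z) = z ⬝ᵥ D *ᵥ z + z ⬝ᵥ D *ᵥ x := by
      rw [← hz, dotProduct_sub, dotProduct_smul, smul_eq_mul]; ring
    linarith [hmax z]
  have hsq : ((γ - lam) * (z ⬝ᵥ z)) ^ 2 ≤ lam ^ 2 * (x ⬝ᵥ x) * (z ⬝ᵥ z) :=
    calc ((γ - lam) * (z ⬝ᵥ z)) ^ 2
        ≤ (z ⬝ᵥ D *ᵥ x) ^ 2 := pow_le_pow_left₀ (by nlinarith) hlin 2
      _ ≤ (z ⬝ᵥ D *ᵥ z) * (x ⬝ᵥ D *ᵥ x) := hD.dotProduct_mulVec_sq_le z x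
      _ ≤ (lam * (z ⬝ᵥ z)) * (lam * (x ⬝ᵥ x)) :=
        mul_le_mul (hmax z) (hmax x) (hD.dotProduct_mulVec_self_nonneg x)
          ((hD.dotProduct_mulVec_self_nonneg z).trans (hmax z))
      _ = lam ^ 2 * (x ⬝ᵥ x) * (z ⬝ᵥ z) := by ring
  rcases hzz.eq_or_lt with hz0 | hzpos
  · rw [← hz0, mul_zero]
    exact mul_nonneg (sq_nonneg lam) (by simpa using dotProduct_star_self_nonneg x)
  · rw [mul_pow, sq (z ⬝ᵥ z), ← mul_assoc] at hsq
    exact le_of_mul_le_mul_right hsq hzpos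

end Matrix

theorem mul_one_add_sqrt_div_le {lam c ρ s : ℝ} (hρ : 0 < ρ) (hlam : 0 ≤ lam) (hc : 0 ≤ c)
    (h : lam ^ 2 * s ≤ c ^ 2 * ρ ^ 2) : lam * (1 + √s / ρ) ≤ lam + c := by
  have := Real.sqrt_le_sqrt h
  rw [Real.sqrt_mul (sq_nonneg _), ← mul_pow, Real.sqrt_sq hlam,
    Real.sqrt_sq (mul_nonneg hc hρ.le)] at this
  rw [mul_add, mul_one, ← mul_div_assoc, add_le_add_iff_left, div_le_iff₀ hρ]
  exact this

theorem add_le_mul_one_add_sqrt_div {lam c ρ t : ℝ} (hρ : 0 < ρ) (hlam : 0 ≤ lam) (hc : 0 ≤ c)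
    (h : c ^ 2 * ρ ^ 2 ≤ lam ^ 2 * t) : lam + c ≤ lam * (1 + √t / ρ) := by
  have := Real.sqrt_le_sqrt h
  rw [← mul_pow, Real.sqrt_sq (mul_nonneg hc hρ.le), Real.sqrt_mul (sq_nonneg _),
    Real.sqrt_sq hlam] at this
  rw [mul_add, mul_one, ← mul_div_assoc, add_le_add_iff_left, le_div_iff₀ hρ]
  exact this

theorem stmt7_general {d : ℕ} (ρ : ℝ) (hρ : 0 < ρ) (Sg D : Matrix (Fin d) (Fin d) ℝ)
    (hSg : Sg.PosDef) (hD : D.PosSemidef)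
    (lam1 : ℝ) (v1 : Fin d → ℝ)
    (hv1 : v1 ⬝ᵥ v1 = 1) (heig : D *ᵥ v1 = lam1 • v1)
    (hmax : ∀ x : Fin d → ℝ, x ⬝ᵥ (D *ᵥ x) ≤ lam1 * (x ⬝ᵥ x))
    (γs : ℝ) (hγs : (γs • (1 : Matrix (Fin d) (Fin d) ℝ) - D).PosDef)
    (hroot : (Sg * (1 - γs • (γs • (1 : Matrix (Fin d) (Fin d) ℝ) - D)⁻¹) ^ 2).trace = ρ ^ 2) :
    lam1 * (1 + Real.sqrt (v1 ⬝ᵥ (Sg *ᵥ v1)) / ρ) ≤ γs ∧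
      γs ≤ lam1 * (1 + Real.sqrt Sg.trace / ρ) := by
  set A := γs • (1 : Matrix (Fin d) (Fin d) ℝ) - D with hA
  set B := γs • A⁻¹ - 1 with hB
  have hAdet : IsUnit A.det := hγs.det_pos.ne'.isUnit
  have hAB : A * B = D := by
    rw [hB, mul_sub, Matrix.mul_smul, mul_nonsing_inv A hAdet, mul_one, hA]
    abel
  have hBh : B.IsHermitian := (hγs.isHermitian.inv.smul (.all γs)).sub isHermitian_one
  have hroot' : (Sg * B ^ 2).trace = ρ ^ 2 := by rw [← hroot, ← neg_sub, neg_sq]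
  have hAmulVec (z : Fin d → ℝ) : A *ᵥ z = γs • z - D *ᵥ z := by
    rw [hA, sub_mulVec, smul_mulVec, one_mulVec]
  have hAv1 : A *ᵥ v1 = (γs - lam1) • v1 := by rw [hAmulVec, heig, sub_smul]
  have hlam1 : 0 ≤ lam1 := by
    simpa [heig, hv1] using hD.dotProduct_mulVec_self_nonneg v1
  have hgap : 0 < γs - lam1 := by
    have hv1ne : v1 ≠ 0 := by rintro rfl; simp at hv1
    simpa [hAv1, hv1] using hγs.dotProduct_mulVec_pos hv1ne
  have hBv1 : (γs - lam1) • (B *ᵥ v1) = lam1 • v1 := by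
    refine mulVec_injective_iff_isUnit.mpr ((isUnit_iff_isUnit_det A).mpr hAdet) ?_
    simp only [mulVec_smul, mulVec_mulVec, hAB, heig, hAv1, smul_smul, mul_comm]
  have hupper : (γs - lam1) ^ 2 * ρ ^ 2 ≤ lam1 ^ 2 * Sg.trace := by
    rw [← hroot']
    refine hSg.posSemidef.mul_trace_mul_sq_le hBh fun x => ?_
    refine hD.sub_sq_mul_dotProduct_self_le hmax (sub_pos.mp hgap).le ?_
    rw [← hAmulVec, mulVec_mulVec, hAB]
  have hlower : lam1 ^ 2 * (v1 ⬝ᵥ (Sg *ᵥ v1)) ≤ (γs - lam1) ^ 2 * ρ ^ 2 := by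
    have hquad (r : ℝ) (w : Fin d → ℝ) : (r • w) ⬝ᵥ Sg *ᵥ (r • w) = r ^ 2 * (w ⬝ᵥ Sg *ᵥ w) := by
      simp only [mulVec_smul, dotProduct_smul, smul_dotProduct, smul_eq_mul]; ring
    calc lam1 ^ 2 * (v1 ⬝ᵥ (Sg *ᵥ v1))
        = (γs - lam1) ^ 2 * ((B *ᵥ v1) ⬝ᵥ Sg *ᵥ (B *ᵥ v1)) := by rw [← hquad, ← hBv1, hquad]
      _ ≤ (γs - lam1) ^ 2 * ρ ^ 2 := by
        rw [← hroot']
        exact mul_le_mul_of_nonneg_left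
          (hSg.posSemidef.dotProduct_mulVec_le_trace_mul_sq hBh hv1) (sq_nonneg _)
  constructor
  · exact (mul_one_add_sqrt_div_le hρ hlam1 hgap.le hlower).trans_eq (by ring)
  · exact (by ring : γs = lam1 + (γs - lam1)).trans_le
      (add_le_mul_one_add_sqrt_div hρ hlam1 hgap.le hupper)

/-- Bisection interval: any root `γ⋆` of `Tr(Σ (I − γ⋆(γ⋆ I − D)⁻¹)²) = ρ²` with
`γ⋆ I − D ≻ 0` satisfies `λ₁(1 + √(v₁ᵀ Σ v₁)/ρ) ≤ γ⋆ ≤ λ₁(1 + √(Tr Σ)/ρ)`, where `λ₁` is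
the largest eigenvalue of `D` and `v₁` a corresponding unit eigenvector. -/
theorem stmt7 {d : ℕ} [NeZero d] (ρ : ℝ) (hρ : 0 < ρ) (Sg D : Matrix (Fin d) (Fin d) ℝ)
    (hSg : Sg.PosDef) (hD : D.PosSemidef) (hD0 : D ≠ 0)
    (lam1 : ℝ) (v1 : Fin d → ℝ)
    (hv1 : v1 ⬝ᵥ v1 = 1) (heig : D *ᵥ v1 = lam1 • v1)
    (hmax : ∀ x : Fin d → ℝ, x ⬝ᵥ (D *ᵥ x) ≤ lam1 * (x ⬝ᵥ x))
    (γs : ℝ) (hγs : (γs • (1 : Matrix (Fin d) (Fin d) ℝ) - D).PosDef)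
    (hroot : (Sg * (1 - γs • (γs • (1 : Matrix (Fin d) (Fin d) ℝ) - D)⁻¹) ^ 2).trace = ρ ^ 2) :
    lam1 * (1 + Real.sqrt (v1 ⬝ᵥ (Sg *ᵥ v1)) / ρ) ≤ γs ∧
      γs ≤ lam1 * (1 + Real.sqrt Sg.trace / ρ) :=
  stmt7_general ρ hρ Sg D hSg hD lam1 v1 hv1 heig hmax γs hγs hroot
end
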